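/- Let a, b ∈ F ⊆ G be the two free generators. (i) For every y ∈ Y and every g ∈ {1_G, a, b, ab}: α(g, y) = y and ρ(g, y) = τ(g); the four elements τ(1_G) = 1_G, τ(a) = (1,0), τ(b) = (0,1), τ(ab) = (1,1) are pairwise distinct, so the four pairs (g·(y), ρ*(g, (y))) — where (y) denotes the one-letter word — are pairwise distinct. (ii) For every y ∈ Y and every nonempty finite word w over X, the unordered pair {(a·(yw), ρ*(a, yw)), (b·(yw), ρ*(b, yw))} equals the unordered pair {(yw, 1_G), ((ab)·(yw), ρ*(ab, yw))}, where yw denotes the word with first letter y followed by w. -/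

import Mathlib

/-- The group `G = H × F(a,b) × ℤ × ℤ` (with `ℤ` written multiplicatively so that the product
carries a group structure). The free group on two generators is `FreeGroup Bool`, with
generators `a = .of false` and `b = .of true`. -/
abbrev GG (H : Type) : Type := H × FreeGroup Bool × Multiplicative ℤ × Multiplicative ℤ

/-- The group `K = H × F(a,b) × ℤ`. -/
abbrev KK (H : Type) : Type := H × FreeGroup Bool × Multiplicative ℤ

/-- `π₁ : G → K`, `(h,f,n,m) ↦ (h,f,n)`. -/
def pi1 {H : Type} (g : GG H) : KK H := (g.1, g.2.1, g.2.2.1)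

/-- `π₂ : G → K`, `(h,f,n,m) ↦ (h,f,m)`. -/
def pi2 {H : Type} (g : GG H) : KK H := (g.1, g.2.1, g.2.2.2)

/-- `ζ₁ : G → ℤ`, `(h,f,n,m) ↦ n`. -/
def zeta1 {H : Type} (g : GG H) : ℤ := Multiplicative.toAdd g.2.2.1

/-- `ζ₂ : G → ℤ`, `(h,f,n,m) ↦ m`. -/
def zeta2 {H : Type} (g : GG H) : ℤ := Multiplicative.toAdd g.2.2.2

/-- The exponent sum of the generator `i` in an element of the free group on two generators. -/
def expSum (i : Bool) : FreeGroup Bool →* Multiplicative ℤ :=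
  FreeGroup.lift (fun j => Multiplicative.ofAdd (if j = i then (1 : ℤ) else 0))

/-- `τ : G → G`, `(h,f,n,m) ↦ (1,1,|f|_a,|f|_b)`, the abelianization of `F` in `G`. -/
def tau {H : Type} [Group H] (g : GG H) : GG H :=
  (1, 1, expSum false g.2.1, expSum true g.2.1)

/-- The alphabet `X = Y ⊔ Z`, `Y = {yⁱ_n : n ∈ ℤ}`, `Z = {zⁱ_k : k ∈ K}`, `i ∈ {1,2}`
(`i = 1` encoded as `false`, `i = 2` as `true`). -/
inductive Letter (H : Type) : Type
  | y : Bool → ℤ → Letter H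
  | z : Bool → KK H → Letter H

/-- The letter action `α : G × X → X`:
`α(g, yⁱ_n) = yⁱ_{ζᵢ(g)+n}` and `α(g, zⁱ_k) = zⁱ_{πᵢ(g)·k}`. -/
def actL {H : Type} [Group H] (g : GG H) : Letter H → Letter H
  | Letter.y false n => Letter.y false (zeta1 g + n)
  | Letter.y true n => Letter.y true (zeta2 g + n)
  | Letter.z false k => Letter.z false (pi1 g * k)
  | Letter.z true k => Letter.z true (pi2 g * k)

/-- The restriction `ρ : G × X → G`: `ρ(g, yⁱ_n) = τ(g)` and `ρ(g, zⁱ_k) = 1`. -/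
def resL {H : Type} [Group H] (g : GG H) : Letter H → GG H
  | Letter.y _ _ => tau g
  | Letter.z _ _ => 1

/-- The action of `G` on finite words over `X`:
`g·ε = ε` and `g·(x w) = α(g,x) (ρ(g,x)·w)`. -/
def wact {H : Type} [Group H] : GG H → List (Letter H) → List (Letter H)
  | _, [] => []
  | g, x :: w => actL g x :: wact (resL g x) w

/-- The restriction of `g ∈ G` along a word: `ρ*(g,ε) = g`, `ρ*(g, x w) = ρ*(ρ(g,x), w)`. -/
def wres {H : Type} [Group H] : GG H → List (Letter H) → GG H
  | g, [] => g
  | g, x :: w => wres (resL g x) w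

/-- The generator `a ∈ F ⊆ G`. -/
def aG (H : Type) [Group H] : GG H := (1, FreeGroup.of false, 1, 1)

/-- The generator `b ∈ F ⊆ G`. -/
def bG (H : Type) [Group H] : GG H := (1, FreeGroup.of true, 1, 1)

/-! Every `g ∈ {1, a, b, ab}` has trivial `ℤ²`-part, so it fixes the letter `y` and restricts to
`τ(g) ∈ ℤ²`; these four restrictions are distinct. An element of `ℤ²` has trivial free part, so it
restricts to `1` on every letter: on `y x w'` the element `g` changes only `x`, by `τ(g)`.
Each letter is moved by at most one of the two coordinates of `ℤ²`, so one of `τ(a)`, `τ(b)` fixes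
`x` while the other acts on it as `τ(ab) = τ(a) τ(b)` does. -/

section

variable {H : Type} [Group H]

lemma tau_mul (g h : GG H) : tau (g * h) = tau g * tau h := by
  simp [tau]

lemma tau_mul_comm (g h : GG H) : tau g * tau h = tau h * tau g := by
  simp [tau, mul_comm]

lemma tau_one : tau (1 : GG H) = 1 := by
  simp [tau]

lemma tau_aG : tau (aG H) = ((1, 1, Multiplicative.ofAdd 1, Multiplicative.ofAdd 0) : GG H) := by
  simp [tau, aG, expSum]

lemma tau_bG : tau (bG H) = ((1, 1, Multiplicative.ofAdd 0, Multiplicative.ofAdd 1) : GG H) := by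
  simp [tau, bG, expSum]

lemma tau_aG_mul_bG :
    tau (aG H * bG H) = ((1, 1, Multiplicative.ofAdd 1, Multiplicative.ofAdd 1) : GG H) := by
  rw [tau_mul, tau_aG, tau_bG]
  simp [Prod.mul_def]

lemma tau_pairwise_ne :
    List.Pairwise (· ≠ ·) [tau (1 : GG H), tau (aG H), tau (bG H), tau (aG H * bG H)] := by
  refine List.Pairwise.of_map (S := (· ≠ ·)) (fun g : GG H => (zeta1 g, zeta2 g))
    (fun _ _ hne heq => hne (heq ▸ rfl)) ?_
  rw [tau_one, tau_aG, tau_bG, tau_aG_mul_bG]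
  exact (by decide : List.Pairwise (· ≠ ·) [((0 : ℤ), (0 : ℤ)), (1, 0), (0, 1), (1, 1)])

lemma actL_one (x : Letter H) : actL (1 : GG H) x = x := by
  cases x with
  | y i n => cases i <;> simp [actL, zeta1, zeta2]
  | z i k => cases i <;> simp [actL, pi1, pi2, Prod.ext_iff]

lemma zeta1_mul (g h : GG H) : zeta1 (g * h) = zeta1 g + zeta1 h := rfl

lemma zeta2_mul (g h : GG H) : zeta2 (g * h) = zeta2 g + zeta2 h := rfl

lemma pi1_mul (g h : GG H) : pi1 (g * h) = pi1 g * pi1 h := rfl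

lemma pi2_mul (g h : GG H) : pi2 (g * h) = pi2 g * pi2 h := rfl

lemma actL_mul (g h : GG H) (x : Letter H) : actL (g * h) x = actL g (actL h x) := by
  cases x with
  | y i n => cases i <;> simp only [actL, zeta1_mul, zeta2_mul, add_assoc]
  | z i k => cases i <;> simp only [actL, pi1_mul, pi2_mul, mul_assoc]

lemma actL_y_of_snd_snd_eq_one {g : GG H} (hg : g.2.2 = 1) (i : Bool) (n : ℤ) :
    actL g (Letter.y i n) = Letter.y i n := by
  cases i <;> simp [actL, zeta1, zeta2, hg]

lemma actL_eq_self_or_actL_eq_self (c d : Multiplicative ℤ) (x : Letter H) :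
    actL ((1, 1, c, 1) : GG H) x = x ∨ actL ((1, 1, 1, d) : GG H) x = x := by
  cases x with
  | y i n => cases i <;> simp [actL, zeta1, zeta2]
  | z i k => cases i <;> simp [actL, pi1, pi2]

lemma resL_y (g : GG H) (i : Bool) (n : ℤ) : resL g (Letter.y i n) = tau g := rfl

lemma resL_eq_one_of_snd_fst_eq_one {g : GG H} (hg : g.2.1 = 1) (x : Letter H) : resL g x = 1 := by
  cases x with
  | y i n => simp [resL, tau, hg, Prod.ext_iff]
  | z i k => rfl

lemma wact_one (w : List (Letter H)) : wact (1 : GG H) w = w := by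
  induction w with
  | nil => rfl
  | cons x w ih => rw [wact, actL_one, resL_eq_one_of_snd_fst_eq_one rfl, ih]

lemma wres_one (w : List (Letter H)) : wres (1 : GG H) w = 1 := by
  induction w with
  | nil => rfl
  | cons x w ih => rw [wres, resL_eq_one_of_snd_fst_eq_one rfl, ih]

lemma wact_wres_singleton_y {g : GG H} (hg : g.2.2 = 1) (i : Bool) (n : ℤ) :
    (wact g [Letter.y i n], wres g [Letter.y i n]) = ([Letter.y i n], tau g) := by
  simp [wact, wres, resL_y, actL_y_of_snd_snd_eq_one hg]

lemma wact_wres_y_cons_cons {g : GG H} (hg : g.2.2 = 1) (i : Bool) (n : ℤ) (x : Letter H)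
    (w : List (Letter H)) :
    (wact g (Letter.y i n :: x :: w), wres g (Letter.y i n :: x :: w)) =
      (Letter.y i n :: actL (tau g) x :: w, 1) := by
  have htau : (tau g).2.1 = 1 := rfl
  rw [wact, wres, actL_y_of_snd_snd_eq_one hg, resL_y, wact, wres,
    resL_eq_one_of_snd_fst_eq_one htau, wact_one, wres_one]

lemma snd_snd_eq_one_of_mem {g : GG H} (hg : g ∈ [1, aG H, bG H, aG H * bG H]) : g.2.2 = 1 := by
  simp only [List.mem_cons, List.not_mem_nil, or_false] at hg
  rcases hg with rfl | rfl | rfl | rfl <;> rfl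

end

/-- (i) Every `g ∈ {1, a, b, ab}` fixes each letter `y ∈ Y` with restriction `τ(g)`; the values
`τ(1) = 1`, `τ(a) = (1,0)`, `τ(b) = (0,1)`, `τ(ab) = (1,1)` are pairwise distinct, so the four
pairs `(g·(y), ρ*(g,(y)))` are pairwise distinct. (ii) For every `y ∈ Y` and nonempty word `w`,
the unordered pair `{(a·(yw), ρ*(a,yw)), (b·(yw), ρ*(b,yw))}` equals
`{(yw, 1), ((ab)·(yw), ρ*(ab,yw))}`. -/
theorem stmt10 (H : Type) [Group H] :
    (∀ (i : Bool) (n : ℤ), ∀ g ∈ ({1, aG H, bG H, aG H * bG H} : Set (GG H)),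
      actL g (Letter.y i n) = Letter.y i n ∧ resL g (Letter.y i n) = tau g) ∧
    (tau (1 : GG H) = 1 ∧
      tau (aG H) = ((1, 1, Multiplicative.ofAdd 1, Multiplicative.ofAdd 0) : GG H) ∧
      tau (bG H) = ((1, 1, Multiplicative.ofAdd 0, Multiplicative.ofAdd 1) : GG H) ∧
      tau (aG H * bG H) = ((1, 1, Multiplicative.ofAdd 1, Multiplicative.ofAdd 1) : GG H)) ∧
    List.Pairwise (· ≠ ·) [tau (1 : GG H), tau (aG H), tau (bG H), tau (aG H * bG H)] ∧
    (∀ (i : Bool) (n : ℤ),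
      List.Pairwise (· ≠ ·)
        (([1, aG H, bG H, aG H * bG H] : List (GG H)).map
          (fun g => (wact g [Letter.y i n], wres g [Letter.y i n])))) ∧
    (∀ (i : Bool) (n : ℤ) (w : List (Letter H)), w ≠ [] →
      ({(wact (aG H) (Letter.y i n :: w), wres (aG H) (Letter.y i n :: w)),
        (wact (bG H) (Letter.y i n :: w), wres (bG H) (Letter.y i n :: w))} :
          Set (List (Letter H) × GG H)) =
      {(Letter.y i n :: w, (1 : GG H)),
        (wact (aG H * bG H) (Letter.y i n :: w), wres (aG H * bG H) (Letter.y i n :: w))}) := by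
  refine ⟨fun i n g hg => ⟨actL_y_of_snd_snd_eq_one (snd_snd_eq_one_of_mem (by simpa using hg)) i n,
      resL_y g i n⟩, ⟨tau_one, tau_aG, tau_bG, tau_aG_mul_bG⟩, tau_pairwise_ne, fun i n => ?_, ?_⟩
  · have htau : List.Pairwise (tau · ≠ tau ·) [1, aG H, bG H, aG H * bG H] :=
      List.pairwise_map.mp tau_pairwise_ne
    refine List.pairwise_map.mpr (htau.imp_of_mem fun ha hb hne heq => hne ?_)
    rw [wact_wres_singleton_y (snd_snd_eq_one_of_mem ha),
      wact_wres_singleton_y (snd_snd_eq_one_of_mem hb)] at heq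
    exact congrArg Prod.snd heq
  · rintro i n w hw
    obtain ⟨x, w, rfl⟩ := List.exists_cons_of_ne_nil hw
    rw [wact_wres_y_cons_cons rfl, wact_wres_y_cons_cons rfl, wact_wres_y_cons_cons rfl,
      tau_mul]
    obtain ha | hb : actL (tau (aG H)) x = x ∨ actL (tau (bG H)) x = x := by
      rw [tau_aG, tau_bG]
      exact actL_eq_self_or_actL_eq_self _ _ x
    · rw [tau_mul_comm, actL_mul, ha]
    · rw [actL_mul, hb, Set.pair_comm]
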